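/- Let G be a graph on n ≥ 2 vertices, k ≥ 1 and ℓ ≥ 0 integers, and let G' with terminals s, t be the pair-copies graph of G. Then G contains a path P with at least two vertices such that |V(P)| ≤ k and |N_G(V(P))| ≥ ℓ if and only if G' contains an st-path P' with |V(P')| ≤ k + 2 and |N_{G'}(V(P'))| ≥ ℓ + 2(binom(n,2) − 1). -/

import Mathlib

open SimpleGraph

/-!
Distinct copies of `G` in `G'` are joined only through `s` and `t`, so an `st`-path of `G'` enters
some copy `G_{vw}` at the copy of `v`, stays inside it, and leaves for `t` from the copy of `w`:
the `st`-paths of `G'` are exactly the lifts `s, P, t` of the `vw`-paths `P` of `G` with `v < w`,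
and every path of `G` with at least two vertices is such a path up to reversal. The neighbourhood
of a lift is the copy of `N_G(V(P))` in `G_{vw}` together with the two vertices of every other copy
that are adjacent to `s` or `t`, which accounts for the extra `2 (binom(n,2) - 1)`.
-/

/-- The open neighborhood of a vertex set `S`: vertices outside `S` adjacent to some
vertex of `S`. -/
def openNbhd {V : Type*} (G : SimpleGraph V) (S : Set V) : Set V :=
  {v | v ∉ S ∧ ∃ w ∈ S, G.Adj v w}

/-- The pair-copies graph `G'` of a graph `G` with a linear order on its vertices:
for every pair `v < w` of vertices of `G` there is a disjoint copy of `G`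
(modelled as `Sum.inl (⟨(v, w), _⟩, a)` for `a : V`), together with two new
vertices `s = Sum.inr false` and `t = Sum.inr true`, where `s` is adjacent exactly
to the copy of `v` in each copy `G_{vw}`, and `t` is adjacent exactly to the copy
of `w` in each copy `G_{vw}`. -/
def pairCopies {V : Type*} [LinearOrder V] (G : SimpleGraph V) :
    SimpleGraph (({q : V × V // q.1 < q.2} × V) ⊕ Bool) :=
  SimpleGraph.fromRel (fun a b =>
    match a, b with
    | Sum.inl (e, a), Sum.inl (e', b) => e = e' ∧ G.Adj a b
    | Sum.inr false, Sum.inl (e, a) => a = e.1.1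
    | Sum.inr true, Sum.inl (e, a) => a = e.1.2
    | _, _ => False)

abbrev LtPair (V : Type*) [LT V] := {q : V × V // q.1 < q.2}

theorem card_ltPair (V : Type*) [Fintype V] [LinearOrder V] :
    Fintype.card (LtPair V) = (Fintype.card V).choose 2 :=
  (Fintype.card_subtype _).trans Fintype.card_product_filter_lt

theorem Sum.inl_prod_mk_right_injective {α β γ : Type*} (a : α) :
    Function.Injective (fun b : β => (Sum.inl (a, b) : (α × β) ⊕ γ)) :=
  fun _ _ h => (Prod.mk.inj (Sum.inl_injective h)).2

theorem ncard_fst_ne {α : Type*} [Finite α] (a : α) :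
    {p : α × Bool | p.1 ≠ a}.ncard = 2 * (Nat.card α - 1) := by
  have : {p : α × Bool | p.1 ≠ a} = {a}ᶜ ×ˢ Set.univ := by ext; simp
  rw [this, Set.ncard_prod, Set.ncard_compl, Set.ncard_singleton, Set.ncard_univ,
    Nat.card_eq_fintype_card (α := Bool), Fintype.card_bool, mul_comm]

namespace LtPair

variable {V : Type*} [LinearOrder V]

def endpoint (e : LtPair V) (b : Bool) : V := cond b e.1.2 e.1.1

theorem endpoint_injective (e : LtPair V) : Function.Injective e.endpoint := by
  intro b b'
  have := e.2.ne
  cases b <;> cases b' <;> simp_all [endpoint, eq_comm]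

end LtPair

section

variable {V : Type*} [LinearOrder V] {G : SimpleGraph V}

theorem exists_isPath_iff_exists_ltPair {P : List V → Prop} (hP : ∀ l, P l.reverse ↔ P l) :
    (∃ (u v : V) (p : G.Walk u v), p.IsPath ∧ 2 ≤ p.support.length ∧ P p.support) ↔
      ∃ (e : LtPair V) (r : G.Walk e.1.1 e.1.2), r.IsPath ∧ P r.support := by
  constructor
  · rintro ⟨u, v, p, hp, hlen, hPp⟩
    have huv : u ≠ v := by
      rintro rfl
      rw [Walk.eq_nil_iff_nil.mpr (Walk.isPath_iff_nil.mp hp)] at hlen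
      simp at hlen
    rcases huv.lt_or_gt with h | h
    · exact ⟨⟨(u, v), h⟩, p, hp, hPp⟩
    · exact ⟨⟨(v, u), h⟩, p.reverse, hp.reverse, by rwa [Walk.support_reverse, hP]⟩
  · rintro ⟨e, r, hr, hPr⟩
    have : r.length ≠ 0 := fun h => e.2.ne (Walk.eq_of_length_eq_zero h)
    exact ⟨_, _, r, hr, by rw [Walk.length_support]; omega, hPr⟩

theorem pairCopies_adj_inl_inl {e e' : LtPair V} {a b : V} :
    (pairCopies G).Adj (Sum.inl (e, a)) (Sum.inl (e', b)) ↔ e = e' ∧ G.Adj a b := by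
  simp only [pairCopies, fromRel_adj]
  grind [G.adj_symm, G.ne_of_adj]

theorem pairCopies_adj_inr_inl {b : Bool} {e : LtPair V} {a : V} :
    (pairCopies G).Adj (Sum.inr b) (Sum.inl (e, a)) ↔ a = e.endpoint b := by
  cases b <;> simp [pairCopies, LtPair.endpoint]

theorem pairCopies_adj_inl_inr {b : Bool} {e : LtPair V} {a : V} :
    (pairCopies G).Adj (Sum.inl (e, a)) (Sum.inr b) ↔ a = e.endpoint b :=
  adj_comm _ _ _ |>.trans pairCopies_adj_inr_inl

theorem pairCopies_not_adj_inr_inr {b b' : Bool} :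
    ¬ (pairCopies G).Adj (Sum.inr b) (Sum.inr b') := by
  cases b <;> cases b' <;> simp [pairCopies]

theorem pairCopies_adj_source (e : LtPair V) :
    (pairCopies G).Adj (Sum.inr false) (Sum.inl (e, e.1.1)) :=
  pairCopies_adj_inr_inl.mpr rfl

theorem pairCopies_adj_target (e : LtPair V) :
    (pairCopies G).Adj (Sum.inl (e, e.1.2)) (Sum.inr true) :=
  pairCopies_adj_inl_inr.mpr rfl

theorem openNbhd_pairCopies (e : LtPair V) {S : Set V} (hS : ∀ b, e.endpoint b ∈ S) :
    openNbhd (pairCopies G) (Set.range Sum.inr ∪ (fun a => Sum.inl (e, a)) '' S) =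
      (fun a => Sum.inl (e, a)) '' openNbhd G S ∪
        (fun p : LtPair V × Bool => Sum.inl (p.1, p.1.endpoint p.2)) '' {p | p.1 ≠ e} := by
  ext (⟨e', y⟩ | b)
  · have := hS false
    have := hS true
    simp only [openNbhd, Set.mem_ofPred_eq, Set.mem_union, Set.mem_image, Set.mem_range,
      Sum.exists, Bool.exists_bool, Sum.inl.injEq, Prod.mk.injEq, reduceCtorEq, false_or,
      or_false, exists_exists_and_eq_and, pairCopies_adj_inl_inl, pairCopies_adj_inl_inr,
      Prod.exists, exists_eq_right_right]
    grind
  · simp [openNbhd]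

theorem ncard_openNbhd_pairCopies [Fintype V] (e : LtPair V) {S : Set V}
    (hS : ∀ b, e.endpoint b ∈ S) :
    (openNbhd (pairCopies G) (Set.range Sum.inr ∪ (fun a => Sum.inl (e, a)) '' S)).ncard =
      (openNbhd G S).ncard + 2 * ((Fintype.card V).choose 2 - 1) := by
  have hinj : Function.Injective fun p : LtPair V × Bool =>
      (Sum.inl (p.1, p.1.endpoint p.2) : (LtPair V × V) ⊕ Bool) := by
    rintro ⟨e₁, b₁⟩ ⟨e₂, b₂⟩ h
    simp only [Sum.inl.injEq, Prod.mk.injEq] at h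
    obtain ⟨rfl, h⟩ := h
    rw [e₁.endpoint_injective h]
  have hdisj : Disjoint ((fun a => (Sum.inl (e, a) : (LtPair V × V) ⊕ Bool)) '' openNbhd G S)
      ((fun p : LtPair V × Bool => Sum.inl (p.1, p.1.endpoint p.2)) '' {p | p.1 ≠ e}) := by
    rw [Set.disjoint_left]
    rintro _ ⟨a, -, rfl⟩ ⟨p, hp, h⟩
    exact hp (Prod.mk.inj (Sum.inl_injective h)).1
  rw [openNbhd_pairCopies e hS, Set.ncard_union_eq hdisj,
    Set.ncard_image_of_injective _ (Sum.inl_prod_mk_right_injective e),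
    Set.ncard_image_of_injective _ hinj, ncard_fst_ne, Nat.card_eq_fintype_card, card_ltPair]

def liftWalkToT (e : LtPair V) : ∀ {a : V}, G.Walk a e.1.2 →
    (pairCopies G).Walk (Sum.inl (e, a)) (Sum.inr true)
  | _, .nil => .cons (pairCopies_adj_target e) .nil
  | _, .cons h r => .cons (pairCopies_adj_inl_inl.mpr ⟨rfl, h⟩) (liftWalkToT e r)

def liftWalk (e : LtPair V) (r : G.Walk e.1.1 e.1.2) :
    (pairCopies G).Walk (Sum.inr false) (Sum.inr true) :=
  .cons (pairCopies_adj_source e) (liftWalkToT e r)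

theorem support_liftWalkToT (e : LtPair V) : ∀ {a : V} (r : G.Walk a e.1.2),
    (liftWalkToT e r).support = r.support.map (fun a => Sum.inl (e, a)) ++ [Sum.inr true]
  | _, .nil => by rw [liftWalkToT]; rfl
  | _, .cons h r => by rw [liftWalkToT, Walk.support_cons, support_liftWalkToT e r]; rfl

theorem support_liftWalk (e : LtPair V) (r : G.Walk e.1.1 e.1.2) :
    (liftWalk e r).support =
      Sum.inr false :: (r.support.map (fun a => Sum.inl (e, a)) ++ [Sum.inr true]) := by
  rw [liftWalk, Walk.support_cons, support_liftWalkToT]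

theorem isPath_liftWalk_iff (e : LtPair V) (r : G.Walk e.1.1 e.1.2) :
    (liftWalk e r).IsPath ↔ r.IsPath := by
  simp [Walk.isPath_def, support_liftWalk, List.nodup_append,
    List.nodup_map_iff (Sum.inl_prod_mk_right_injective e)]

theorem length_support_liftWalk (e : LtPair V) (r : G.Walk e.1.1 e.1.2) :
    (liftWalk e r).support.length = r.support.length + 2 := by
  simp [support_liftWalk]

theorem setOf_mem_support_liftWalk (e : LtPair V) (r : G.Walk e.1.1 e.1.2) :
    {x | x ∈ (liftWalk e r).support} =
      Set.range Sum.inr ∪ (fun a => Sum.inl (e, a)) '' {a | a ∈ r.support} := by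
  ext (x | b)
  · simp [support_liftWalk]
  · cases b <;> simp [support_liftWalk]

theorem exists_eq_liftWalkToT : ∀ {e : LtPair V} {a : V}
    (q : (pairCopies G).Walk (Sum.inl (e, a)) (Sum.inr true)), q.IsPath →
    Sum.inr false ∉ q.support → ∃ r : G.Walk a e.1.2, q = liftWalkToT e r
  | e, a, .cons (v := Sum.inr true) h q, hq, _ => by
    obtain rfl : a = e.1.2 := pairCopies_adj_inl_inr.mp h
    obtain rfl : q = .nil := Walk.eq_nil_iff_nil.mpr (Walk.isPath_iff_nil.mp hq.of_cons)
    exact ⟨.nil, by rw [liftWalkToT]⟩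
  | e, a, .cons (v := Sum.inr false) h q, _, hs => absurd (by simp) hs
  | e, a, .cons (v := Sum.inl (e', b)) h q, hq, hs => by
    obtain ⟨r, rfl⟩ := exists_eq_liftWalkToT q hq.of_cons (by simp_all)
    obtain ⟨rfl, hab⟩ := pairCopies_adj_inl_inl.mp h
    exact ⟨.cons hab r, by rw [liftWalkToT]⟩
termination_by _ _ q => q.length

theorem exists_eq_liftWalk :
    ∀ p : (pairCopies G).Walk (Sum.inr false) (Sum.inr true), p.IsPath →
      ∃ (e : LtPair V) (r : G.Walk e.1.1 e.1.2), p = liftWalk e r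
  | .cons (v := Sum.inl (e, a)) h q, hp => by
    obtain rfl : a = e.1.1 := pairCopies_adj_inr_inl.mp h
    obtain ⟨r, rfl⟩ := exists_eq_liftWalkToT q hp.of_cons (Walk.cons_isPath_iff h q |>.mp hp).2
    exact ⟨e, r, rfl⟩
  | .cons (v := Sum.inr _) h _, _ => absurd h pairCopies_not_adj_inr_inr

theorem exists_isPath_pairCopies_iff
    {P : (pairCopies G).Walk (Sum.inr false) (Sum.inr true) → Prop} :
    (∃ p, p.IsPath ∧ P p) ↔
      ∃ (e : LtPair V) (r : G.Walk e.1.1 e.1.2), r.IsPath ∧ P (liftWalk e r) := by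
  constructor
  · rintro ⟨p, hp, hPp⟩
    obtain ⟨e, r, rfl⟩ := exists_eq_liftWalk p hp
    exact ⟨e, r, (isPath_liftWalk_iff e r).mp hp, hPp⟩
  · rintro ⟨e, r, hr, hPr⟩
    exact ⟨_, (isPath_liftWalk_iff e r).mpr hr, hPr⟩

end

theorem stmt_11_general {V : Type*} [Fintype V] [LinearOrder V] (G : SimpleGraph V)
    (k ℓ : ℕ) :
    (∃ (u v : V) (p : G.Walk u v), p.IsPath ∧ 2 ≤ p.support.length ∧
        p.support.length ≤ k ∧ ℓ ≤ (openNbhd G {x | x ∈ p.support}).ncard) ↔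
      (∃ p' : (pairCopies G).Walk (Sum.inr false) (Sum.inr true), p'.IsPath ∧
        p'.support.length ≤ k + 2 ∧ ℓ + 2 * ((Fintype.card V).choose 2 - 1) ≤ (openNbhd (pairCopies G) {x | x ∈ p'.support}).ncard) := by
  rw [exists_isPath_iff_exists_ltPair
    (P := fun l => l.length ≤ k ∧ ℓ ≤ (openNbhd G {x | x ∈ l}).ncard) (by simp),
    exists_isPath_pairCopies_iff]
  refine exists_congr fun e => exists_congr fun r => and_congr_right fun _ => ?_
  have hS : ∀ b, e.endpoint b ∈ {x | x ∈ r.support} := by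
    rintro (_ | _)
    exacts [r.start_mem_support, r.end_mem_support]
  rw [length_support_liftWalk, setOf_mem_support_liftWalk, ncard_openNbhd_pairCopies e hS]
  omega

/-- Short unsecluded: |V(P)| ≤ k, |N| ≥ ℓ iff ... in G'. -/
theorem stmt_11 {V : Type*} [Fintype V] [LinearOrder V] (G : SimpleGraph V)
    (hn : 2 ≤ Fintype.card V) (k ℓ : ℕ) (hk : 1 ≤ k) :
    (∃ (u v : V) (p : G.Walk u v), p.IsPath ∧ 2 ≤ p.support.length ∧
        p.support.length ≤ k ∧ ℓ ≤ (openNbhd G {x | x ∈ p.support}).ncard) ↔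
      (∃ p' : (pairCopies G).Walk (Sum.inr false) (Sum.inr true), p'.IsPath ∧
        p'.support.length ≤ k + 2 ∧ ℓ + 2 * ((Fintype.card V).choose 2 - 1) ≤ (openNbhd (pairCopies G) {x | x ∈ p'.support}).ncard) :=
  stmt_11_general G k ℓ
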